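/- arXiv:1911.02280 — 6 statements merged into one kernel-verified Lean document; each statement's English description precedes it below -/
import Mathlib

section
/- Let u solve the heat equation ∂_t u = Δu on a locally finite weighted graph G over a time interval I. Then for every j ≥ 0, every vertex x, and every time s ∈ I, one has |∂_t^{j+1} u(x,s)| ≤ 2^{j+1} · (sup_{y ∈ B_j(x)} Deg(y))^{j+1} · sup_{y ∈ B_{j+1}(x)} |u(y,s)|, where B_j(x) is the ball of radius j around x in the combinatorial distance. -/
open Real Filter

/-- A weighted graph: symmetric nonnegative edge weights, positive vertex
weights, locally finite. -/
structure WeightedGraph (V : Type*) where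
  ω : V → V → ℝ
  μ : V → ℝ
  symm : ∀ x y, ω x y = ω y x
  nonneg : ∀ x y, 0 ≤ ω x y
  loopless : ∀ x, ω x x = 0
  μ_pos : ∀ x, 0 < μ x
  locFin : ∀ x, (Function.support (ω x)).Finite

namespace WeightedGraph

variable {V : Type*}

/-- The graph Laplacian Δf(x) = Σ_y (ω_{xy}/μ_x)(f(y) - f(x)). -/
noncomputable def lap (G : WeightedGraph V) (f : V → ℝ) (x : V) : ℝ :=
  ∑' y, (G.ω x y / G.μ x) * (f y - f x)

/-- The weighted degree Deg(x) = Σ_y ω_{xy}/μ_x. -/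
noncomputable def deg (G : WeightedGraph V) (x : V) : ℝ :=
  ∑' y, G.ω x y / G.μ x

/-- The underlying simple graph: x ~ y iff ω_{xy} ≠ 0. -/
def adj (G : WeightedGraph V) : SimpleGraph V :=
  SimpleGraph.fromRel (fun x y => G.ω x y ≠ 0)

/-- The combinatorial graph distance. -/
noncomputable def dist (G : WeightedGraph V) (x y : V) : ℕ := G.adj.dist x y

/-- Iterated Laplacian Δ^k. -/
noncomputable def lapIter (G : WeightedGraph V) : ℕ → (V → ℝ) → (V → ℝ)
  | 0, f => f
  | (k+1), f => G.lap (G.lapIter k f)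

theorem lap_eq_sum (G : WeightedGraph V) (f : V → ℝ) (x : V) :
    G.lap f x = ∑ y ∈ (G.locFin x).toFinset, (G.ω x y / G.μ x) * (f y - f x) := by
  apply tsum_eq_sum
  intro y hy
  have : G.ω x y = 0 := by
    by_contra h
    exact hy ((G.locFin x).mem_toFinset.2 h)
  simp [this]

theorem deg_eq_sum (G : WeightedGraph V) (x : V) :
    G.deg x = ∑ y ∈ (G.locFin x).toFinset, G.ω x y / G.μ x := by
  apply tsum_eq_sum
  intro y hy
  have : G.ω x y = 0 := by
    by_contra h
    exact hy ((G.locFin x).mem_toFinset.2 h)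
  simp [this]

theorem deg_nonneg (G : WeightedGraph V) (x : V) : 0 ≤ G.deg x :=
  tsum_nonneg fun y => div_nonneg (G.nonneg x y) (G.μ_pos x).le

theorem dist_self' (G : WeightedGraph V) (x : V) : G.dist x x = 0 := by
  simp [WeightedGraph.dist]

theorem dist_le_one_of_ne (G : WeightedGraph V) {x y : V} (h : G.ω x y ≠ 0) :
    G.dist x y ≤ 1 := by
  have hne : x ≠ y := by
    rintro rfl; exact h (G.loopless x)
  have hadj : G.adj.Adj x y := by
    rw [WeightedGraph.adj, SimpleGraph.fromRel_adj]
    exact ⟨hne, Or.inl h⟩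
  exact le_of_eq (SimpleGraph.dist_eq_one_iff_adj.2 hadj)

/-- Basic bound for one application of the Laplacian. -/
theorem abs_lap_le (G : WeightedGraph V) (hconn : G.adj.Connected) (f : V → ℝ) (x : V)
    (M : ℝ) (hM : ∀ y, G.dist x y ≤ 1 → |f y| ≤ M) :
    |G.lap f x| ≤ 2 * G.deg x * M := by
  have hMx : |f x| ≤ M := hM x (by simp [dist_self'])
  have hM0 : 0 ≤ M := (abs_nonneg _).trans hMx
  rw [lap_eq_sum, deg_eq_sum]
  calc |∑ y ∈ (G.locFin x).toFinset, (G.ω x y / G.μ x) * (f y - f x)|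
      ≤ ∑ y ∈ (G.locFin x).toFinset, |(G.ω x y / G.μ x) * (f y - f x)| :=
        Finset.abs_sum_le_sum_abs _ _
    _ ≤ ∑ y ∈ (G.locFin x).toFinset, (G.ω x y / G.μ x) * (2 * M) := by
        apply Finset.sum_le_sum
        intro y hy
        have hy' : G.ω x y ≠ 0 := by
          simpa [Function.mem_support] using (G.locFin x).mem_toFinset.1 hy
        have hnn : 0 ≤ G.ω x y / G.μ x := div_nonneg (G.nonneg x y) (G.μ_pos x).le
        rw [abs_mul, abs_of_nonneg hnn]
        apply mul_le_mul_of_nonneg_left _ hnn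
        calc |f y - f x| ≤ |f y| + |f x| := abs_sub _ _
          _ ≤ M + M := add_le_add (hM y (G.dist_le_one_of_ne hy')) hMx
          _ = 2 * M := by ring
    _ = (∑ y ∈ (G.locFin x).toFinset, G.ω x y / G.μ x) * (2 * M) := by
        rw [Finset.sum_mul]
    _ ≤ 2 * (∑ y ∈ (G.locFin x).toFinset, G.ω x y / G.μ x) * M := le_of_eq (by ring)

theorem lapIter_succ' (G : WeightedGraph V) (k : ℕ) (f : V → ℝ) :
    G.lapIter (k+1) f = G.lapIter k (G.lap f) := by
  induction k with
  | zero => rfl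
  | succ k ih =>
    show G.lap (G.lapIter (k+1) f) = G.lap (G.lapIter k (G.lap f))
    rw [ih]

/-- Iterated bound. -/
theorem abs_lapIter_le (G : WeightedGraph V) (hconn : G.adj.Connected) (x : V) (D : ℝ) :
    ∀ (k : ℕ) (f : V → ℝ) (M : ℝ), (∀ y, G.dist x y ≤ k → G.deg y ≤ D) →
    (∀ y, G.dist x y ≤ k + 1 → |f y| ≤ M) →
    |G.lapIter (k+1) f x| ≤ (2*D)^(k+1) * M := by
  intro k
  induction k with
  | zero =>
    intro f M hD hM
    have hM0 : 0 ≤ M := (abs_nonneg _).trans (hM x (by simp [dist_self']))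
    have h1 : |G.lap f x| ≤ 2 * G.deg x * M := G.abs_lap_le hconn f x M hM
    have h2 : G.deg x ≤ D := hD x (by simp [dist_self'])
    calc |G.lapIter 1 f x| = |G.lap f x| := rfl
      _ ≤ 2 * G.deg x * M := h1
      _ ≤ (2*D)^(0+1) * M := by
          rw [pow_one]
          have : 2 * G.deg x ≤ 2 * D := by linarith
          exact mul_le_mul_of_nonneg_right this hM0
  | succ k ih =>
    intro f M hD hM
    have hM0 : 0 ≤ M := (abs_nonneg _).trans (hM x (by simp [dist_self']))
    have hD0 : 0 ≤ D := (G.deg_nonneg x).trans (hD x (by simp [dist_self']))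
    rw [lapIter_succ']
    have key : |G.lapIter (k+1) (G.lap f) x| ≤ (2*D)^(k+1) * (2*D*M) := by
      apply ih
      · intro y hy; exact hD y (hy.trans (Nat.le_succ _))
      · intro y hy
        have hbound : ∀ z, G.dist y z ≤ 1 → |f z| ≤ M := by
          intro z hz
          apply hM
          calc G.dist x z ≤ G.dist x y + G.dist y z := hconn.dist_triangle
            _ ≤ (k+1) + 1 := add_le_add hy hz
        have hdy : G.deg y ≤ D := hD y hy
        calc |G.lap f y| ≤ 2 * G.deg y * M := G.abs_lap_le hconn f y M hbound
          _ ≤ 2 * D * M := by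
              apply mul_le_mul_of_nonneg_right _ hM0
              linarith
    calc |G.lapIter (k+1) (G.lap f) x| ≤ (2*D)^(k+1) * (2*D*M) := key
      _ = (2*D)^(k+1+1) * M := by ring

end WeightedGraph

/-- |∂_t^{j+1} u(x,s)| ≤ 2^{j+1}·(sup_{B_j(x)} Deg)^{j+1}·sup_{B_{j+1}(x)} |u(·,s)|. -/
theorem iterated_time_derivative_bound {V : Type*} (G : WeightedGraph V)
    (hconn : G.adj.Connected) (a b : ℝ) (hab : a ≤ b) (u : V → ℝ → ℝ)
    (hsmooth : ∀ x, ContDiffOn ℝ (⊤ : ℕ∞) (u x) (Set.Icc a b))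
    (hheat : ∀ x, ∀ t ∈ Set.Icc a b,
      HasDerivWithinAt (u x) (G.lap (fun y => u y t) x) (Set.Icc a b) t)
    (j : ℕ) (x : V) (s : ℝ) (hs : s ∈ Set.Icc a b)
    (D M : ℝ) (hD : ∀ y, G.dist x y ≤ j → G.deg y ≤ D)
    (hM : ∀ y, G.dist x y ≤ j + 1 → |u y s| ≤ M) :
    |iteratedDerivWithin (j+1) (u x) (Set.Icc a b) s| ≤ 2^(j+1) * D^(j+1) * M := by
  have hD0 : 0 ≤ D := (G.deg_nonneg x).trans (hD x (by simp [WeightedGraph.dist_self']))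
  have hM0 : 0 ≤ M := (abs_nonneg _).trans (hM x (by simp [WeightedGraph.dist_self']))
  have hRHS : 0 ≤ 2^(j+1) * D^(j+1) * M :=
    mul_nonneg (mul_nonneg (by positivity) (pow_nonneg hD0 _)) hM0
  rcases eq_or_lt_of_le hab with rfl | hlt
  · -- degenerate case: Icc a a = {a}
    have hsa : s = a := by
      rcases hs with ⟨h1, h2⟩; linarith
    subst hsa
    have hzero : iteratedDerivWithin (j+1) (u x) (Set.Icc s s) s = 0 := by
      rw [Set.Icc_self, iteratedDerivWithin_eq_iteratedFDerivWithin,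
        iteratedFDerivWithin_succ_apply_left]
      have : fderivWithin ℝ (iteratedFDerivWithin ℝ j (u x) {s}) {s} s = 0 := by
        apply fderivWithin_zero_of_not_accPt
        rw [accPt_iff_nhds]; push_neg; exact ⟨Set.univ, Filter.univ_mem, fun y hy => by simpa using hy.2⟩
      rw [this]
      simp
    rw [hzero]
    simpa using hRHS
  · -- main case
    have huniq : UniqueDiffOn ℝ (Set.Icc a b) := uniqueDiffOn_Icc hlt
    have key : ∀ k, ∀ y, ∀ t ∈ Set.Icc a b,
        HasDerivWithinAt (fun t => G.lapIter k (fun z => u z t) y)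
          (G.lapIter (k+1) (fun z => u z t) y) (Set.Icc a b) t := by
      intro k
      induction k with
      | zero =>
        intro y t ht
        simpa [WeightedGraph.lapIter] using hheat y t ht
      | succ k ih =>
        intro y t ht
        have h1 : (fun t => G.lapIter (k+1) (fun z => u z t) y)
            = fun t => ∑ y' ∈ (G.locFin y).toFinset, (G.ω y y' / G.μ y) *
                (G.lapIter k (fun z => u z t) y' - G.lapIter k (fun z => u z t) y) := by
          funext t
          exact G.lap_eq_sum _ y
        have h2 : G.lapIter (k+1+1) (fun z => u z t) y
            = ∑ y' ∈ (G.locFin y).toFinset, (G.ω y y' / G.μ y) *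
                (G.lapIter (k+1) (fun z => u z t) y' - G.lapIter (k+1) (fun z => u z t) y) :=
          G.lap_eq_sum _ y
        rw [h1, h2]
        exact HasDerivWithinAt.fun_sum fun y' _ => ((ih y' t ht).sub (ih y t ht)).const_mul _
    have hiter : ∀ k, ∀ t ∈ Set.Icc a b,
        iteratedDerivWithin k (u x) (Set.Icc a b) t = G.lapIter k (fun z => u z t) x := by
      intro k
      induction k with
      | zero => intro t ht; simp [WeightedGraph.lapIter]
      | succ k ih =>
        intro t ht
        rw [iteratedDerivWithin_succ,
          derivWithin_congr (fun r hr => ih r hr) (ih t ht)]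
        exact (key k x t ht).derivWithin (huniq t ht)
    rw [hiter (j+1) s hs]
    have := G.abs_lapIter_le hconn x D j (fun z => u z s) M hD hM
    calc |G.lapIter (j+1) (fun z => u z s) x| ≤ (2*D)^(j+1) * M := this
      _ = 2^(j+1) * D^(j+1) * M := by rw [mul_pow]
end

section
/- Fix constants A₁ > 0, C > 0 and R ≥ 1, and suppose 0 < δ < 1/(2eC). Then Q_k = (2δC)^k / k! · A₁ · exp((k+R)·ln(k+R)) tends to 0 as k → ∞. -/
/-!
Since `k! ≥ (k/e)^k` and `(k + R)^k ≤ e^R k^k`, the term `x^k / k! · (k + R)^(k + R)` is at most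
`e^R (k + R)^R (e|x|)^k`: polynomial growth in `k` against a geometric sequence of ratio `e|x| < 1`.
-/

open Real Filter Topology
open scoped Nat

lemma pow_self_div_factorial_le_exp_one_pow (n : ℕ) : (n : ℝ) ^ n / n ! ≤ exp 1 ^ n := by
  rw [← exp_nat_mul, mul_one]
  exact pow_div_factorial_le_exp _ n.cast_nonneg n

lemma add_pow_le_pow_mul_exp (n : ℕ) {b : ℝ} (hb : 0 ≤ b) :
    ((n : ℝ) + b) ^ n ≤ (n : ℝ) ^ n * exp b := by
  rcases n.eq_zero_or_pos with rfl | hn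
  · simpa using one_le_exp hb
  have hn' : (0 : ℝ) < n := by exact_mod_cast hn
  have hbase : (n : ℝ) + b ≤ n * exp (b / n) := by
    have := mul_le_mul_of_nonneg_left (add_one_le_exp (b / n)) hn'.le
    rwa [mul_add, mul_div_cancel₀ _ hn'.ne', mul_one, add_comm] at this
  calc ((n : ℝ) + b) ^ n ≤ (n * exp (b / n)) ^ n := by gcongr
    _ = (n : ℝ) ^ n * exp b := by rw [mul_pow, ← exp_nat_mul, mul_div_cancel₀ _ hn'.ne']

lemma add_rpow_le_mul_pow_ceil {k : ℕ} (hk : 1 ≤ k) {R : ℝ} (hR : 0 ≤ R) :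
    ((k : ℝ) + R) ^ R ≤ (1 + R) ^ R * (k : ℝ) ^ ⌈R⌉₊ := by
  have hk' : (1 : ℝ) ≤ k := by exact_mod_cast hk
  calc ((k : ℝ) + R) ^ R ≤ ((1 + R) * k) ^ R := by gcongr; nlinarith
    _ = (1 + R) ^ R * (k : ℝ) ^ R := mul_rpow (by positivity) (by positivity)
    _ ≤ (1 + R) ^ R * (k : ℝ) ^ ⌈R⌉₊ := by
      gcongr
      rw [← rpow_natCast]
      exact rpow_le_rpow_of_exponent_le hk' (Nat.le_ceil R)

lemma abs_pow_div_factorial_mul_add_rpow_self_le {k : ℕ} (hk : 1 ≤ k) (x : ℝ) {R : ℝ} (hR : 0 ≤ R) :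
    |x| ^ k / k ! * ((k : ℝ) + R) ^ ((k : ℝ) + R) ≤
      exp R * (1 + R) ^ R * ((k : ℝ) ^ ⌈R⌉₊ * (|x| * exp 1) ^ k) := by
  have hkR : (0 : ℝ) < k + R := by positivity
  rw [rpow_add hkR, rpow_natCast]
  calc |x| ^ k / k ! * (((k : ℝ) + R) ^ k * ((k : ℝ) + R) ^ R)
      ≤ |x| ^ k / k ! * ((k : ℝ) ^ k * exp R * ((1 + R) ^ R * (k : ℝ) ^ ⌈R⌉₊)) := by
        gcongr
        exacts [add_pow_le_pow_mul_exp k hR, add_rpow_le_mul_pow_ceil hk hR]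
    _ = |x| ^ k * ((k : ℝ) ^ k / k !) * (exp R * (1 + R) ^ R * (k : ℝ) ^ ⌈R⌉₊) := by ring
    _ ≤ |x| ^ k * exp 1 ^ k * (exp R * (1 + R) ^ R * (k : ℝ) ^ ⌈R⌉₊) := by
        gcongr; exact pow_self_div_factorial_le_exp_one_pow k
    _ = exp R * (1 + R) ^ R * ((k : ℝ) ^ ⌈R⌉₊ * (|x| * exp 1) ^ k) := by ring

lemma tendsto_pow_div_factorial_mul_add_rpow_self {x R : ℝ} (hx : |x| * exp 1 < 1) (hR : 0 ≤ R) :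
    Tendsto (fun k : ℕ => x ^ k / k ! * ((k : ℝ) + R) ^ ((k : ℝ) + R)) atTop (𝓝 0) := by
  have hbound := (tendsto_pow_const_mul_const_pow_of_lt_one ⌈R⌉₊ (by positivity) hx).const_mul
    (exp R * (1 + R) ^ R)
  rw [mul_zero] at hbound
  refine squeeze_zero_norm' ?_ hbound
  filter_upwards [eventually_ge_atTop 1] with k hk
  have hkR : (0 : ℝ) ≤ k + R := by positivity
  rw [norm_mul, norm_div, norm_pow, Real.norm_eq_abs, RCLike.norm_natCast,
    Real.norm_of_nonneg (rpow_nonneg hkR _)]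
  exact abs_pow_div_factorial_mul_add_rpow_self_le hk x hR

theorem remainder_tendsto_zero_borderline_general
    (A₁ C δ R : ℝ) (hC : 0 < C) (hR : 1 ≤ R)
    (hδ0 : 0 < δ) (hδ : δ < 1 / (2 * Real.exp 1 * C)) :
    Filter.Tendsto
      (fun k : ℕ => (2 * δ * C) ^ k / (Nat.factorial k : ℝ) * A₁ *
        Real.exp (((k : ℝ) + R) * Real.log ((k : ℝ) + R)))
      Filter.atTop (nhds 0) := by
  have hratio : |2 * δ * C| * exp 1 < 1 := by
    rw [abs_of_pos (by positivity)]
    have := (lt_div_iff₀ (by positivity)).mp hδ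
    linarith
  have hlim := (tendsto_pow_div_factorial_mul_add_rpow_self hratio (zero_le_one.trans hR)).const_mul A₁
  rw [mul_zero] at hlim
  refine hlim.congr fun k => ?_
  rw [rpow_def_of_pos (by positivity), mul_comm (log _)]
  ring

/-- remainder estimate, borderline case ζ = 0, δ < 1/(2eC): Q_k → 0. -/
theorem remainder_tendsto_zero_borderline
    (A₁ C δ R : ℝ) (hA₁ : 0 < A₁) (hC : 0 < C) (hR : 1 ≤ R)
    (hδ0 : 0 < δ) (hδ : δ < 1 / (2 * Real.exp 1 * C)) :
    Filter.Tendsto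
      (fun k : ℕ => (2 * δ * C) ^ k / (Nat.factorial k : ℝ) * A₁ *
        Real.exp (((k : ℝ) + R) * Real.log ((k : ℝ) + R)))
      Filter.atTop (nhds 0) :=
  remainder_tendsto_zero_borderline_general A₁ C δ R hC hR hδ0 hδ
end

section
/- Let G be a weighted graph with sup_x Deg(x) ≤ D, base vertex p, and let a: V → ℝ satisfy |Δ^k a(x)| ≤ A₃·(2D)^k·exp(A₄·(k + d(x,p))·ln(k + d(x,p))) for all k ≥ 0, where A₃ > 0 and 0 < A₄ < 1. Then for any δ < 1/(2De), the series v(x,t) = Σ_{k≥0} Δ^k a(x)·t^k/k! converges absolutely and uniformly on B_R(p) × (−δ, 0] for every R ≥ 1. -/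
open Real Filter

open Topology
open scoped Nat

/-!
On `B_R(p) × (-δ, 0]` the `k`-th term is bounded by
`M k = |A₃| (2|D|δ)^k exp(A₄ (k+R) log (k+R)) / k!`, and the Weierstrass M-test applies once
`∑ M k < ∞`. Since `(s+1) log (s+1) - s log s ≤ log (s+1) + 1`, the ratio `M (k+1) / M k` is
at most a constant times `(k+1+R)^A₄ / (k+1)`, which tends to `0` because `A₄ < 1`; so the
majorant is summable by the ratio test.
-/

theorem tendsto_add_const_rpow_div_atTop {A : ℝ} (hA : A < 1) (R : ℝ) :
    Tendsto (fun x : ℝ => (x + R) ^ A / x) atTop (𝓝 0) := by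
  have hquot : Tendsto (fun x : ℝ => 1 + R / x) atTop (𝓝 (1 + 0)) :=
    tendsto_const_nhds.add (tendsto_const_nhds.div_atTop tendsto_id)
  have hpow : Tendsto (fun x : ℝ => (x + R) ^ (A - 1)) atTop (𝓝 0) := by
    simpa only [Function.comp_def, id_eq, neg_sub] using
      (tendsto_rpow_neg_atTop (sub_pos.2 hA)).comp (tendsto_atTop_add_const_right _ R tendsto_id)
  refine ((hquot.mul hpow).congr' ?_).trans (by rw [add_zero, one_mul])
  filter_upwards [eventually_gt_atTop 0, eventually_gt_atTop (-R)] with x hx hxR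
  have hxR' : x + R ≠ 0 := by linarith
  rw [rpow_sub_one hxR']
  field_simp

theorem mul_log_add_one_le {s : ℝ} (hs : 0 < s) :
    (s + 1) * log (s + 1) ≤ s * log s + log (s + 1) + 1 := by
  have hlog : log ((s + 1) / s) ≤ (s + 1) / s - 1 := log_le_sub_one_of_pos (by positivity)
  rw [log_div (by positivity) hs.ne', div_sub_one hs.ne', add_sub_cancel_left,
    le_div_iff₀' hs] at hlog
  linarith

theorem exp_mul_add_one_mul_log_le {A s : ℝ} (hA : 0 ≤ A) (hs : 0 < s) :
    exp (A * (s + 1) * log (s + 1)) ≤ exp A * (s + 1) ^ A * exp (A * s * log s) := by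
  rw [rpow_def_of_pos (by positivity), ← exp_add, ← exp_add]
  refine exp_le_exp.2 ?_
  nlinarith [mul_le_mul_of_nonneg_left (mul_log_add_one_le hs) hA]

theorem summable_pow_mul_exp_mul_log_div_factorial (c : ℝ) {A R : ℝ} (hA₀ : 0 ≤ A)
    (hA₁ : A < 1) (hR : 0 ≤ R) :
    Summable fun k : ℕ => c ^ k * exp (A * (k + R) * log (k + R)) / k ! := by
  have hratio : Tendsto (fun k : ℕ => |c| * exp A * (((k : ℝ) + 1 + R) ^ A / ((k : ℝ) + 1)))
      atTop (𝓝 0) := by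
    simpa using ((tendsto_add_const_rpow_div_atTop hA₁ R).comp
      (tendsto_atTop_add_const_right _ 1 tendsto_natCast_atTop_atTop)).const_mul (|c| * exp A)
  refine summable_of_ratio_norm_eventually_le (r := 1 / 2) (by norm_num) ?_
  filter_upwards [hratio.eventually_le_const (by norm_num : (0 : ℝ) < 1 / 2),
    eventually_ge_atTop 1] with k hk hk₁
  have hs : 0 < (k : ℝ) + R := add_pos_of_pos_of_nonneg (Nat.cast_pos.2 hk₁) hR
  simp only [norm_div, norm_mul, norm_pow, Real.norm_eq_abs, Nat.abs_cast,
    Nat.factorial_succ, Nat.cast_mul, Nat.cast_succ, abs_exp]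
  rw [abs_of_pos (by positivity : (0 : ℝ) < k + 1)]
  rw [add_right_comm (k : ℝ) 1 R] at hk ⊢
  set s := (k : ℝ) + R
  calc |c| ^ (k + 1) * exp (A * (s + 1) * log (s + 1)) / ((k + 1) * k !)
      = |c| ^ k / k ! * (|c| * exp (A * (s + 1) * log (s + 1)) / (k + 1)) := by
        rw [mul_comm _ (k.factorial : ℝ), ← div_div]; ring
    _ ≤ |c| ^ k / k ! * (|c| * (exp A * (s + 1) ^ A * exp (A * s * log s)) / (k + 1)) := by
      gcongr
      exact exp_mul_add_one_mul_log_le hA₀ hs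
    _ = |c| * exp A * ((s + 1) ^ A / (k + 1)) * (|c| ^ k * exp (A * s * log s) / k !) := by ring
    _ ≤ 1 / 2 * (|c| ^ k * exp (A * s * log s) / k !) := by gcongr

theorem exp_mul_natCast_mul_log_le {A S : ℝ} (hA : 0 ≤ A) {n : ℕ} (hn : (n : ℝ) ≤ S)
    (hS : 1 ≤ S) : exp (A * n * log n) ≤ exp (A * S * log S) := by
  rw [mul_assoc, mul_assoc]
  refine exp_le_exp.2 (mul_le_mul_of_nonneg_left ?_ hA)
  rcases n.eq_zero_or_pos with rfl | hn₀
  · simpa using mul_log_nonneg hS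
  · have h₁ : exp (-1) ≤ (n : ℝ) := (exp_le_one_iff.2 (by norm_num)).trans (by exact_mod_cast hn₀)
    exact mul_log_strictMonoOn.monotoneOn h₁ (h₁.trans hn) hn

theorem abs_mul_pow_div_factorial_le {b B t δ : ℝ} (k : ℕ) (hb : |b| ≤ B)
    (ht : t ∈ Set.Ioc (-δ) 0) : |b * t ^ k / k !| ≤ B * δ ^ k / k ! := by
  have ht' : |t| ≤ δ := abs_le.2 ⟨ht.1.le, by linarith [ht.1, ht.2]⟩
  rw [abs_div, abs_mul, abs_pow, Nat.abs_cast]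
  gcongr
  exact (abs_nonneg b).trans hb

theorem series_converges_absolutely_uniformly_general {V : Type*} (G : WeightedGraph V)
    (p : V) (D A₃ A₄ δ : ℝ)
    (hA₄0 : 0 < A₄) (hA₄1 : A₄ < 1)
    (a : V → ℝ)
    (ha : ∀ (k : ℕ) (x : V), |G.lapIter k a x| ≤
      A₃ * (2 * D) ^ k * Real.exp (A₄ * ((k : ℝ) + (G.dist x p : ℝ)) *
        Real.log ((k : ℝ) + (G.dist x p : ℝ)))) :
    ∀ R : ℝ, 1 ≤ R →
      (∀ q : V × ℝ, q ∈ {x : V | (G.dist x p : ℝ) ≤ R} ×ˢ Set.Ioc (-δ) (0:ℝ) →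
        Summable (fun k : ℕ => |G.lapIter k a q.1 * q.2 ^ k / (Nat.factorial k : ℝ)|)) ∧
      TendstoUniformlyOn
        (fun (n : ℕ) (q : V × ℝ) =>
          ∑ k ∈ Finset.range n, G.lapIter k a q.1 * q.2 ^ k / (Nat.factorial k : ℝ))
        (fun q => ∑' k : ℕ, G.lapIter k a q.1 * q.2 ^ k / (Nat.factorial k : ℝ))
        Filter.atTop ({x : V | (G.dist x p : ℝ) ≤ R} ×ˢ Set.Ioc (-δ) (0:ℝ)) := by
  intro R hR
  set M : ℕ → ℝ := fun k =>
    |A₃| * ((|2 * D| * δ) ^ k * exp (A₄ * (k + R) * log (k + R)) / k !)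
  have hM : Summable M :=
    (summable_pow_mul_exp_mul_log_div_factorial _ hA₄0.le hA₄1 (by linarith)).mul_left _
  have hbound : ∀ k, ∀ q ∈ {x : V | (G.dist x p : ℝ) ≤ R} ×ˢ Set.Ioc (-δ) (0:ℝ),
      |G.lapIter k a q.1 * q.2 ^ k / k !| ≤ M k := by
    rintro k ⟨x, t⟩ ⟨hx : (G.dist x p : ℝ) ≤ R, ht⟩
    have hlap : |G.lapIter k a x| ≤ |A₃| * |2 * D| ^ k * exp (A₄ * (k + R) * log (k + R)) :=
      calc |G.lapIter k a x|
          ≤ |A₃| * |2 * D| ^ k * exp (A₄ * ((k + G.dist x p : ℕ) : ℝ) *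
              log ((k + G.dist x p : ℕ) : ℝ)) := by
            simpa [abs_mul, abs_pow] using (ha k x).trans (le_abs_self _)
        _ ≤ _ := by
            refine mul_le_mul_of_nonneg_left (exp_mul_natCast_mul_log_le hA₄0.le ?_ ?_)
              (by positivity)
            · push_cast
              linarith
            · linarith [(k.cast_nonneg : (0:ℝ) ≤ k)]
    refine (abs_mul_pow_div_factorial_le k hlap ht).trans_eq ?_
    simp only [M, mul_pow]
    ring
  exact ⟨fun q hq => hM.of_nonneg_of_le (fun _ => abs_nonneg _) (fun k => hbound k q hq),
    tendstoUniformlyOn_tsum_nat hM hbound⟩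

/-- the series Σ Δ^k a(x) t^k/k! converges absolutely and
uniformly on B_R(p) × (−δ, 0]. -/
theorem series_converges_absolutely_uniformly {V : Type*} (G : WeightedGraph V)
    (hconn : G.adj.Connected) (p : V) (D A₃ A₄ δ : ℝ)
    (hD : ∀ x, G.deg x ≤ D) (hA₃ : 0 < A₃) (hA₄0 : 0 < A₄) (hA₄1 : A₄ < 1)
    (a : V → ℝ)
    (ha : ∀ (k : ℕ) (x : V), |G.lapIter k a x| ≤
      A₃ * (2 * D) ^ k * Real.exp (A₄ * ((k : ℝ) + (G.dist x p : ℝ)) *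
        Real.log ((k : ℝ) + (G.dist x p : ℝ))))
    (hδ0 : 0 < δ) (hδ : δ < 1 / (2 * D * Real.exp 1)) :
    ∀ R : ℝ, 1 ≤ R →
      (∀ q : V × ℝ, q ∈ {x : V | (G.dist x p : ℝ) ≤ R} ×ˢ Set.Ioc (-δ) (0:ℝ) →
        Summable (fun k : ℕ => |G.lapIter k a q.1 * q.2 ^ k / (Nat.factorial k : ℝ)|)) ∧
      TendstoUniformlyOn
        (fun (n : ℕ) (q : V × ℝ) =>
          ∑ k ∈ Finset.range n, G.lapIter k a q.1 * q.2 ^ k / (Nat.factorial k : ℝ))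
        (fun q => ∑' k : ℕ, G.lapIter k a q.1 * q.2 ^ k / (Nat.factorial k : ℝ))
        Filter.atTop ({x : V | (G.dist x p : ℝ) ≤ R} ×ˢ Set.Ioc (-δ) (0:ℝ)) :=
  series_converges_absolutely_uniformly_general G p D A₃ A₄ δ hA₄0 hA₄1 a ha
end

section
/- Let G be a weighted graph with sup_x Deg(x) ≤ D and |Δ^k a(x)| ≤ A₃·(2D)^k·exp(A₄·(k + d(x,p))·ln(k + d(x,p))) with 0 < A₄ < 1. Then for δ < 1/(2De) and any ε > 0 with A₄(1+2ε) < 1, the function v(x,t) = Σ_{k≥0} Δ^k a(x)·t^k/k! satisfies a growth bound |v(x,t)| ≤ Ã₃·exp(Ã₄·d(x,p)·ln d(x,p)) on V × (−δ, 0] for some constant Ã₃ > 0 and Ã₄ = A₄(1+2ε) < 1. -/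
open Real Filter

/-!
Split `A₄ (k + d) log (k + d)` into `k log k + A₄ (1 + 2ε) d log d + C`: subadditivity of
`x log x` up to a linear error, and the linear error is absorbed by the spare factors
`(1 - A₄) k log k` and `2ε A₄ d log d` at the cost of a constant. Since `k^k ≤ e^k k!`, the
`k`-th term of the series is then at most `A₃ e^C e^{Ã₄ d log d} (2Dδe)^k`, a geometric series
of ratio `2Dδe < 1`.
-/

namespace Real

lemma mul_log_add_le_mul_log_add {a b : ℝ} (ha : 0 ≤ a) (hb : 0 ≤ b) :
    a * log (a + b) ≤ a * log a + b := by
  rcases ha.eq_or_lt with rfl | ha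
  · simpa using hb
  have hlog : log (a + b) - log a ≤ b / a := by
    rw [← log_div (by positivity) ha.ne']
    calc log ((a + b) / a) ≤ (a + b) / a - 1 := log_le_sub_one_of_pos (by positivity)
      _ = b / a := by field_simp; ring
  have := mul_le_mul_of_nonneg_left hlog ha.le
  rw [mul_div_cancel₀ b ha.ne'] at this
  linarith

lemma add_mul_log_add_le {a b : ℝ} (ha : 0 ≤ a) (hb : 0 ≤ b) :
    (a + b) * log (a + b) ≤ a * log a + b * log b + (a + b) := by
  have h₁ := mul_log_add_le_mul_log_add ha hb
  have h₂ := mul_log_add_le_mul_log_add hb ha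
  rw [add_comm b a] at h₂
  linarith

lemma mul_natCast_le_mul_log_add {c b : ℝ} (hc : 0 ≤ c) (hb : 0 < b) (n : ℕ) :
    c * n ≤ b * n * log n + c * exp (c / b) := by
  have hlog := log_natCast_nonneg n
  rcases le_or_gt (n : ℝ) (exp (c / b)) with hn | hn
  · have : 0 ≤ b * n * log n := by positivity
    nlinarith
  · have hcb : c / b < log n := (lt_log_iff_exp_lt (by linarith [exp_pos (c / b)])).mpr hn
    have : c * n ≤ b * n * log n :=
      calc c * n = c / b * (b * n) := by field_simp
        _ ≤ log n * (b * n) := by gcongr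
        _ = b * n * log n := mul_comm _ _
    linarith [mul_nonneg hc (exp_pos (c / b)).le]

lemma exists_mul_add_mul_log_add_le {A ε : ℝ} (hA₀ : 0 < A) (hA₁ : A < 1) (hε : 0 < ε) :
    ∃ C, ∀ k d : ℕ, A * ((k : ℝ) + d) * log ((k : ℝ) + d) ≤
      k * log k + A * (1 + 2 * ε) * d * log d + C := by
  refine ⟨A * exp (A / (1 - A)) + A * exp (A / (2 * ε * A)), fun k d => ?_⟩
  have hsplit := mul_le_mul_of_nonneg_left (add_mul_log_add_le k.cast_nonneg d.cast_nonneg) hA₀.le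
  have hk := mul_natCast_le_mul_log_add hA₀.le (sub_pos.mpr hA₁) k
  have hd := mul_natCast_le_mul_log_add hA₀.le (by positivity : 0 < 2 * ε * A) d
  nlinarith

lemma exp_natCast_mul_log_le (k : ℕ) : exp (k * log k) ≤ exp k * k.factorial := by
  rcases k.eq_zero_or_pos with rfl | hk
  · simp
  rw [exp_nat_mul, exp_log (by exact_mod_cast hk), ← div_le_iff₀ (by positivity)]
  exact pow_div_factorial_le_exp _ k.cast_nonneg k

end Real

open Real in
lemma abs_tsum_mul_pow_div_factorial_le {c : ℕ → ℝ} {B r δ t : ℝ} (hB : 0 ≤ B) (hr : 0 ≤ r)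
    (hδ : 0 ≤ δ) (hrδ : r * δ * exp 1 < 1) (ht : |t| ≤ δ)
    (hc : ∀ k, |c k| ≤ B * r ^ k * exp (k * log k)) :
    |∑' k, c k * t ^ k / k.factorial| ≤ B * (1 - r * δ * exp 1)⁻¹ := by
  rw [← norm_eq_abs]
  refine tsum_of_norm_bounded
    ((hasSum_geometric_of_lt_one (by positivity) hrδ).mul_left B) fun k => ?_
  have hfac : (0 : ℝ) < k.factorial := by exact_mod_cast k.factorial_pos
  rw [norm_eq_abs, abs_div, abs_mul, abs_pow, abs_of_pos hfac, div_le_iff₀ hfac]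
  calc |c k| * |t| ^ k ≤ B * r ^ k * (exp k * k.factorial) * δ ^ k := by
        gcongr
        exact (hc k).trans (by gcongr; exact exp_natCast_mul_log_le k)
    _ = B * (r * δ * exp 1) ^ k * k.factorial := by
        rw [← exp_one_pow]; ring

theorem series_growth_bound_general {V : Type*} (G : WeightedGraph V)
    (p : V) (D A₃ A₄ δ ε : ℝ)
    (hA₃ : 0 < A₃) (hA₄0 : 0 < A₄) (hA₄1 : A₄ < 1)
    (a : V → ℝ)
    (ha : ∀ (k : ℕ) (x : V), |G.lapIter k a x| ≤
      A₃ * (2 * D) ^ k * Real.exp (A₄ * ((k : ℝ) + (G.dist x p : ℝ)) *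
        Real.log ((k : ℝ) + (G.dist x p : ℝ))))
    (hδ0 : 0 < δ) (hδ : δ < 1 / (2 * D * Real.exp 1))
    (hε : 0 < ε)
    (v : V → ℝ → ℝ)
    (hv : ∀ x t, v x t = ∑' k : ℕ, G.lapIter k a x * t ^ k / (Nat.factorial k : ℝ)) :
    ∃ A₃' : ℝ, 0 < A₃' ∧ ∀ x, ∀ t ∈ Set.Ioc (-δ) (0:ℝ),
      |v x t| ≤ A₃' * Real.exp ((A₄ * (1 + 2 * ε)) * (G.dist x p : ℝ) *
        Real.log (G.dist x p : ℝ)) := by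
  have hDe : 0 < 2 * D * exp 1 := one_div_pos.mp (hδ0.trans hδ)
  have hD : 0 ≤ 2 * D := (pos_of_mul_pos_left hDe (exp_pos 1).le).le
  have hq : 2 * D * δ * exp 1 < 1 := by linarith [(lt_div_iff₀ hDe).mp hδ]
  obtain ⟨C, hC⟩ := exists_mul_add_mul_log_add_le hA₄0 hA₄1 hε
  refine ⟨A₃ * exp C * (1 - 2 * D * δ * exp 1)⁻¹,
    mul_pos (by positivity) (inv_pos.mpr (sub_pos.mpr hq)), fun x t ⟨ht₁, ht₂⟩ => ?_⟩
  set E := exp (A₄ * (1 + 2 * ε) * (G.dist x p : ℝ) * log (G.dist x p : ℝ))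
  have hcoeff (k : ℕ) : |G.lapIter k a x| ≤ A₃ * exp C * E * (2 * D) ^ k * exp (k * log k) := by
    refine (ha k x).trans ((mul_le_mul_of_nonneg_left
      (exp_le_exp.mpr (hC k (G.dist x p))) (by positivity)).trans_eq ?_)
    rw [exp_add, exp_add]
    ring
  rw [hv]
  refine (abs_tsum_mul_pow_div_factorial_le (by positivity) hD hδ0.le hq
    (abs_le.mpr ⟨by linarith, by linarith⟩) hcoeff).trans_eq (by ring)

/-- growth bound for v(x,t) = Σ Δ^k a(x) t^k/k!. -/
theorem series_growth_bound {V : Type*} (G : WeightedGraph V)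
    (hconn : G.adj.Connected) (p : V) (D A₃ A₄ δ ε : ℝ)
    (hD : ∀ x, G.deg x ≤ D) (hA₃ : 0 < A₃) (hA₄0 : 0 < A₄) (hA₄1 : A₄ < 1)
    (a : V → ℝ)
    (ha : ∀ (k : ℕ) (x : V), |G.lapIter k a x| ≤
      A₃ * (2 * D) ^ k * Real.exp (A₄ * ((k : ℝ) + (G.dist x p : ℝ)) *
        Real.log ((k : ℝ) + (G.dist x p : ℝ))))
    (hδ0 : 0 < δ) (hδ : δ < 1 / (2 * D * Real.exp 1))
    (hε : 0 < ε) (hε' : A₄ * (1 + 2 * ε) < 1)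
    (v : V → ℝ → ℝ)
    (hv : ∀ x t, v x t = ∑' k : ℕ, G.lapIter k a x * t ^ k / (Nat.factorial k : ℝ)) :
    ∃ A₃' : ℝ, 0 < A₃' ∧ ∀ x, ∀ t ∈ Set.Ioc (-δ) (0:ℝ),
      |v x t| ≤ A₃' * Real.exp ((A₄ * (1 + 2 * ε)) * (G.dist x p : ℝ) *
        Real.log (G.dist x p : ℝ)) :=
  series_growth_bound_general G p D A₃ A₄ δ ε hA₃ hA₄0 hA₄1 a ha hδ0 hδ hε v hv
end

section
/- On the integer lattice graph ℤ (with unit weights, Laplacian Δf(x) = f(x+1) + f(x−1) − 2f(x)), define g(t) = exp(−t^{−β}) for t > 0 and g(t) = 0 for t ≤ 0, with β > 1, and define v(x,t) = g(t) + Σ_{k=1}^{∞} g^{(k)}(t)/(2k)! · (x+k)(x+k−1)⋯(x+1)·x·(x−1)⋯(x−k+1) for x ≥ 1, v(0,t)=g(t), and v(x,t)=v(−x−1,t) for x ≤ −1. Then v solves the heat equation ∂_t v(x,t) = v(x+1,t) + v(x−1,t) − 2v(x,t) on ℤ × ℝ. -/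
/-!
For an integer `x`, the products `P_k(x) = (x+k)(x+k-1)⋯(x-k+1)` vanish once `k > |x|`, so the
series defining `v(x, ·)` is a finite sum and may be differentiated termwise, which replaces
`g^(k)` by `g^(k+1)`. On the other side `Δ P_0 = 0` and `Δ P_(k+1) / (2k+2)! = P_k / (2k)!` (the
second difference of a falling factorial), so the two sides agree term by term. The symmetry
`P_k(-x-1) = P_k(x)` turns the two branches of `v` into one formula. Termwise
differentiation needs `g` to be smooth, which holds because the functions `t^r exp(-t^(-β))`
(extended by `0`) are continuous and their derivatives are combinations of functions of the same
kind.
-/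

open Real Filter Topology Finset Polynomial
open scoped ContDiff Nat

/-- The flat function g(t) = exp(−t^{−β}) for t > 0 and g(t) = 0 for t ≤ 0. -/
noncomputable def flatFn (β : ℝ) (t : ℝ) : ℝ :=
  if 0 < t then Real.exp (-(t ^ (-β))) else 0

/-- The ancient solution on ℤ:
v(x,t) = Σ_{k≥0} g^{(k)}(t)/(2k)! · (x+k)⋯(x−k+1) for x ≥ 0 (the k = 0 term
being g(t)), and v(x,t) = v(−x−1,t) for x ≤ −1. -/
noncomputable def latticeSol (β : ℝ) (x : ℤ) (t : ℝ) : ℝ :=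
  if 0 ≤ x then
    ∑' k : ℕ, iteratedDeriv k (flatFn β) t / (Nat.factorial (2 * k) : ℝ) *
      ∏ i ∈ Finset.range (2 * k), ((x : ℝ) + (k : ℝ) - (i : ℝ))
  else
    ∑' k : ℕ, iteratedDeriv k (flatFn β) t / (Nat.factorial (2 * k) : ℝ) *
      ∏ i ∈ Finset.range (2 * k), (((-x - 1 : ℤ) : ℝ) + (k : ℝ) - (i : ℝ))

noncomputable def flatMonomial (β r : ℝ) (t : ℝ) : ℝ :=
  if 0 < t then t ^ r * exp (-(t ^ (-β))) else 0

section FlatMonomial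

variable {β : ℝ}

lemma tendsto_rpow_mul_exp_neg_rpow_neg (hβ : 0 < β) (r : ℝ) :
    Tendsto (fun t : ℝ => t ^ r * exp (-(t ^ (-β)))) (𝓝[>] 0) (𝓝 0) := by
  have h_inv : Tendsto (fun t : ℝ => t ^ (-β)) (𝓝[>] 0) atTop := by
    refine ((tendsto_rpow_atTop hβ).comp tendsto_inv_nhdsGT_zero).congr' ?_
    filter_upwards [self_mem_nhdsWithin] with t (ht : 0 < t)
    rw [Function.comp_apply, rpow_neg ht.le, inv_rpow ht.le]
  -- substituting `u = t^(-β)` turns `t^r` into `u^(-r/β)`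
  have h_exp : Tendsto (fun u : ℝ => u ^ (-(r / β)) * exp (-u)) atTop (𝓝 0) := by
    simpa using tendsto_rpow_mul_exp_neg_mul_atTop_nhds_zero (-(r / β)) 1 one_pos
  refine (h_exp.comp h_inv).congr' ?_
  filter_upwards [self_mem_nhdsWithin] with t (ht : 0 < t)
  rw [Function.comp_apply, ← rpow_mul ht.le]
  congr 2
  field_simp

lemma continuousAt_flatMonomial_zero (hβ : 0 < β) (r : ℝ) :
    ContinuousAt (flatMonomial β r) 0 := by
  rw [← continuousWithinAt_compl_self, ContinuousWithinAt, ← nhdsLT_sup_nhdsGT, tendsto_sup]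
  have h0 : flatMonomial β r 0 = 0 := by simp [flatMonomial]
  rw [h0]
  constructor
  · refine tendsto_const_nhds.congr' ?_
    filter_upwards [self_mem_nhdsWithin] with t (ht : t < 0)
    simp [flatMonomial, ht.not_gt]
  · refine (tendsto_rpow_mul_exp_neg_rpow_neg hβ r).congr' ?_
    filter_upwards [self_mem_nhdsWithin] with t (ht : 0 < t)
    simp [flatMonomial, ht]

lemma hasDerivAt_flatMonomial_of_ne_zero (r : ℝ) {t : ℝ} (ht : t ≠ 0) :
    HasDerivAt (flatMonomial β r)
      (r * flatMonomial β (r - 1) t + β * flatMonomial β (r - β - 1) t) t := by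
  rcases ht.lt_or_gt with ht | ht
  · have h_zero : flatMonomial β r =ᶠ[𝓝 t] fun _ => 0 := by
      filter_upwards [Iio_mem_nhds ht] with s (hs : s < 0)
      simp [flatMonomial, hs.not_gt]
    simpa [flatMonomial, ht.not_gt] using
      (hasDerivAt_const t (0 : ℝ)).congr_of_eventuallyEq h_zero
  · have h_pos : flatMonomial β r =ᶠ[𝓝 t] fun s => s ^ r * exp (-(s ^ (-β))) := by
      filter_upwards [Ioi_mem_nhds ht] with s (hs : 0 < s)
      simp [flatMonomial, hs]
    have h_deriv : HasDerivAt (fun s => s ^ r * exp (-(s ^ (-β))))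
        (r * t ^ (r - 1) * exp (-(t ^ (-β))) +
          t ^ r * (exp (-(t ^ (-β))) * -(-β * t ^ (-β - 1)))) t :=
      (hasDerivAt_rpow_const (Or.inl ht.ne')).mul (hasDerivAt_rpow_const (Or.inl ht.ne')).neg.exp
    refine (h_deriv.congr_of_eventuallyEq h_pos).congr_deriv ?_
    simp only [flatMonomial, if_pos ht]
    rw [show r - β - 1 = r + (-β - 1) by ring, rpow_add ht]
    ring

lemma continuous_flatMonomial (hβ : 0 < β) (r : ℝ) : Continuous (flatMonomial β r) := by
  refine continuous_iff_continuousAt.2 fun t => ?_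
  rcases eq_or_ne t 0 with rfl | ht
  · exact continuousAt_flatMonomial_zero hβ r
  · exact (hasDerivAt_flatMonomial_of_ne_zero r ht).continuousAt

lemma hasDerivAt_flatMonomial (hβ : 0 < β) (r t : ℝ) :
    HasDerivAt (flatMonomial β r)
      (r * flatMonomial β (r - 1) t + β * flatMonomial β (r - β - 1) t) t :=
  hasDerivAt_of_hasDerivAt_of_ne' (fun _ => hasDerivAt_flatMonomial_of_ne_zero r)
    (continuousAt_flatMonomial_zero hβ r)
    (((continuous_flatMonomial hβ _).const_mul r).add
      ((continuous_flatMonomial hβ _).const_mul β)).continuousAt t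

lemma contDiff_flatMonomial (hβ : 0 < β) (r : ℝ) : ContDiff ℝ ∞ (flatMonomial β r) := by
  rw [contDiff_infty]
  intro n
  induction n generalizing r with
  | zero => exact contDiff_zero.2 (continuous_flatMonomial hβ r)
  | succ n ih =>
    have h_deriv : deriv (flatMonomial β r) =
        fun t => r * flatMonomial β (r - 1) t + β * flatMonomial β (r - β - 1) t :=
      funext fun t => (hasDerivAt_flatMonomial hβ r t).deriv
    rw [Nat.cast_add_one, contDiff_succ_iff_deriv, h_deriv]
    exact ⟨fun t => (hasDerivAt_flatMonomial hβ r t).differentiableAt, by simp,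
      (contDiff_const.mul (ih _)).add (contDiff_const.mul (ih _))⟩

end FlatMonomial

lemma contDiff_flatFn {β : ℝ} (hβ : 0 < β) : ContDiff ℝ ∞ (flatFn β) := by
  convert contDiff_flatMonomial hβ 0 using 1
  ext t
  simp [flatFn, flatMonomial]

lemma descPochhammer_eval_add_one_sub {R : Type*} [CommRing R] (n : ℕ) (a : R) :
    (descPochhammer R (n + 1)).eval (a + 1) - (descPochhammer R (n + 1)).eval a =
      (n + 1) * (descPochhammer R n).eval a := by
  have h_left :
      (descPochhammer R (n + 1)).eval (a + 1) = (a + 1) * (descPochhammer R n).eval a := by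
    simp [descPochhammer_succ_left, eval_comp]
  rw [h_left, descPochhammer_succ_eval]
  ring

noncomputable def centralProd (X : ℝ) (k : ℕ) : ℝ :=
  ∏ i ∈ range (2 * k), (X + k - i)

lemma centralProd_eq_descPochhammer_eval (X : ℝ) (k : ℕ) :
    centralProd X k = (descPochhammer ℝ (2 * k)).eval (X + k) := by
  rw [centralProd, descPochhammer_eval_eq_prod_range]

@[simp] lemma centralProd_zero (X : ℝ) : centralProd X 0 = 1 := by simp [centralProd]

lemma centralProd_succ_second_diff (X : ℝ) (k : ℕ) :
    centralProd (X + 1) (k + 1) + centralProd (X - 1) (k + 1) - 2 * centralProd X (k + 1) =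
      (2 * k + 2) * (2 * k + 1) * centralProd X k := by
  have h_outer := descPochhammer_eval_add_one_sub (R := ℝ) (2 * k + 1) (X + k + 1)
  have h_outer' := descPochhammer_eval_add_one_sub (R := ℝ) (2 * k + 1) (X + k)
  have h_inner := descPochhammer_eval_add_one_sub (R := ℝ) (2 * k) (X + k)
  simp only [centralProd_eq_descPochhammer_eval, show 2 * (k + 1) = 2 * k + 1 + 1 by ring]
  push_cast at *
  rw [show X + 1 + (k + 1) = X + k + 1 + 1 by ring, show X - 1 + (k + 1) = X + k by ring,
    show X + (k + 1) = X + k + 1 by ring]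
  linear_combination h_outer - h_outer' + (2 * k + 2) * h_inner

lemma centralProd_intCast_eq_zero {x : ℤ} {k : ℕ} (h : x.natAbs < k) : centralProd x k = 0 := by
  refine prod_eq_zero (i := (x + k).toNat) (mem_range.2 (by omega)) ?_
  have h_cast : (((x + k).toNat : ℕ) : ℝ) = x + k := by
    rw [← Int.cast_natCast, Int.toNat_of_nonneg (by omega)]; push_cast; ring
  rw [h_cast]
  ring

lemma centralProd_neg_sub_one (X : ℝ) (k : ℕ) : centralProd (-X - 1) k = centralProd X k := by
  rw [centralProd, ← prod_range_reflect, centralProd]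
  have h_neg : ∏ i ∈ range (2 * k), (-X - 1 + k - ((2 * k - 1 - i : ℕ) : ℝ)) =
      ∏ i ∈ range (2 * k), -(X + k - i) := by
    refine prod_congr rfl fun i hi => ?_
    rw [Nat.cast_sub (by simp at hi; omega), Nat.cast_sub (by simp at hi; omega)]
    push_cast
    ring
  rw [h_neg, prod_neg, card_range, pow_mul, neg_one_sq, one_pow, one_mul]

lemma centralProd_succ_second_diff_div_factorial (X : ℝ) (k : ℕ) :
    (centralProd (X + 1) (k + 1) + centralProd (X - 1) (k + 1) - 2 * centralProd X (k + 1)) /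
      (2 * (k + 1))! = centralProd X k / (2 * k)! := by
  rw [centralProd_succ_second_diff, show 2 * (k + 1) = 2 * k + 1 + 1 by ring,
    Nat.factorial_succ, Nat.factorial_succ]
  push_cast
  field_simp
  ring

lemma ContDiff.hasDerivAt_iteratedDeriv {f : ℝ → ℝ} (hf : ContDiff ℝ ∞ f) (k : ℕ)
    (t : ℝ) :
    HasDerivAt (iteratedDeriv k f) (iteratedDeriv (k + 1) f t) t := by
  rw [iteratedDeriv_succ]
  exact (hf.differentiable_iteratedDeriv k (mod_cast ENat.natCast_lt_top k)).differentiableAt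
    |>.hasDerivAt

noncomputable def latticeSeries (f : ℝ → ℝ) (x : ℤ) (t : ℝ) : ℝ :=
  ∑' k : ℕ, iteratedDeriv k f t / (2 * k)! * centralProd x k

lemma latticeSeries_eq_sum (f : ℝ → ℝ) {x : ℤ} {N : ℕ} (hN : x.natAbs < N) :
    latticeSeries f x =
      fun t => ∑ k ∈ range N, iteratedDeriv k f t / (2 * k)! * centralProd x k :=
  funext fun t => tsum_eq_sum fun k hk => by
    rw [centralProd_intCast_eq_zero (by simp at hk; omega), mul_zero]

theorem hasDerivAt_latticeSeries {f : ℝ → ℝ} (hf : ContDiff ℝ ∞ f) (x : ℤ) (t : ℝ) :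
    HasDerivAt (fun s => latticeSeries f x s)
      (latticeSeries f (x + 1) t + latticeSeries f (x - 1) t - 2 * latticeSeries f x t) t := by
  set M := x.natAbs + 1
  have h_deriv : HasDerivAt (fun s => latticeSeries f x s)
      (∑ k ∈ range M, iteratedDeriv (k + 1) f t / (2 * k)! * centralProd x k) t := by
    rw [latticeSeries_eq_sum f (N := M) (by omega)]
    exact HasDerivAt.fun_sum fun k _ => ((hf.hasDerivAt_iteratedDeriv k t).div_const _).mul_const _
  convert h_deriv using 1
  rw [latticeSeries_eq_sum f (N := M + 1) (x := x + 1) (by omega),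
    latticeSeries_eq_sum f (N := M + 1) (x := x - 1) (by omega),
    latticeSeries_eq_sum f (N := M + 1) (x := x) (by omega)]
  simp only [mul_sum, ← sum_add_distrib, ← sum_sub_distrib]
  rw [sum_range_succ', add_eq_left.2 (by simp only [centralProd_zero]; ring)]
  refine sum_congr rfl fun k _ => ?_
  push_cast
  rw [div_mul_comm _ _ (centralProd x k), ← centralProd_succ_second_diff_div_factorial]
  ring

lemma latticeSol_eq_latticeSeries (β : ℝ) : latticeSol β = latticeSeries (flatFn β) := by
  funext x t
  unfold latticeSol latticeSeries
  split_ifs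
  · rfl
  · refine tsum_congr fun k => ?_
    rw [← centralProd_neg_sub_one (x : ℝ)]
    push_cast
    rfl

/-- v solves the heat equation on ℤ × ℝ. -/
theorem latticeSol_solves_heat (β : ℝ) (hβ : 1 < β) :
    ∀ (x : ℤ) (t : ℝ),
      HasDerivAt (fun s => latticeSol β x s)
        (latticeSol β (x + 1) t + latticeSol β (x - 1) t - 2 * latticeSol β x t) t := by
  rw [latticeSol_eq_latticeSeries]
  exact hasDerivAt_latticeSeries (contDiff_flatFn (by linarith))
end

section
/- Let g(t) = exp(−t^{−β}) for t > 0 and g(t) = 0 for t ≤ 0, with β > 0. Then there exists θ ∈ (0,1) such that for all k ≥ 1 and all t, |g^{(k)}(t)| ≤ k!·(2k/(e·β·θ^β))^{k/β}. -/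
/-!
For `t > 0`, `g` is the restriction of `F(z) = exp(-z^{-β})`, holomorphic on `Re z > 0`. On the
disc of radius `θt` about `t`, with `θ ≤ 1/2` and `βθ ≤ 1/5`, the argument of `z` is at most `πθ`
and `|z| ≤ (1 + θ)t`, so `Re z^{-β} ≥ t^{-β}/2` and `|F| ≤ e^{-t^{-β}/2}`. Cauchy's estimate then
gives `|g^{(k)}(t)| ≤ k! e^{-t^{-β}/2} (θt)^{-k}`, and maximising `u^{k/β} e^{-u/2}` over
`u = t^{-β}` yields the bound. The same estimate shows `g^{(k)}(t) = o(t)` as `t → 0⁺`, which is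
what lets the derivatives of `g` glue across `t = 0`.
-/

open Real Filter

open scoped Nat Topology

noncomputable def flatFnComplex (β : ℝ) (z : ℂ) : ℂ :=
  Complex.exp (-z ^ (-(β : ℂ)))

noncomputable def flatFnDeriv (β : ℝ) (j : ℕ) (t : ℝ) : ℝ :=
  if 0 < t then (iteratedDeriv j (flatFnComplex β) t).re else 0

lemma flatFnDeriv_of_nonpos (β : ℝ) (j : ℕ) {t : ℝ} (ht : t ≤ 0) : flatFnDeriv β j t = 0 :=
  if_neg ht.not_gt

lemma flatFnDeriv_of_pos (β : ℝ) (j : ℕ) {t : ℝ} (ht : 0 < t) :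
    flatFnDeriv β j t = (iteratedDeriv j (flatFnComplex β) t).re :=
  if_pos ht

lemma flatFnDeriv_zero (β : ℝ) : flatFnDeriv β 0 = flatFn β := by
  ext t
  rcases le_or_gt t 0 with ht | ht
  · rw [flatFnDeriv_of_nonpos β 0 ht, flatFn, if_neg ht.not_gt]
  · rw [flatFnDeriv_of_pos β 0 ht, flatFn, if_pos ht, iteratedDeriv_zero, flatFnComplex,
      ← Complex.ofReal_neg, ← Complex.ofReal_cpow ht.le, ← Complex.ofReal_neg,
      ← Complex.ofReal_exp, Complex.ofReal_re]

lemma differentiableOn_flatFnComplex (β : ℝ) :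
    DifferentiableOn ℂ (flatFnComplex β) {z | 0 < z.re} := fun _ hz =>
  ((differentiableAt_id.cpow (differentiableAt_const _) (Or.inl hz)).neg.cexp
    ).differentiableWithinAt

lemma analyticOnNhd_iteratedDeriv_flatFnComplex (β : ℝ) (j : ℕ) :
    AnalyticOnNhd ℂ (iteratedDeriv j (flatFnComplex β)) {z | 0 < z.re} := by
  induction j with
  | zero =>
    simpa using (differentiableOn_flatFnComplex β).analyticOnNhd
      (isOpen_lt continuous_const Complex.continuous_re)
  | succ j ih =>
    rw [iteratedDeriv_succ]
    exact ih.deriv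

lemma one_sub_mul_le_one_add_rpow_neg {x β : ℝ} (hx : -1 < x) (hβ : 0 ≤ β) :
    1 - β * x ≤ (1 + x) ^ (-β) := by
  have hlog : Real.log (1 + x) ≤ x := by
    linarith [Real.log_le_sub_one_of_pos (by linarith : 0 < 1 + x)]
  rw [rpow_def_of_pos (by linarith)]
  nlinarith [add_one_le_exp (Real.log (1 + x) * -β)]

section Disc

variable {β t θ : ℝ} {z : ℂ}

lemma half_le_re_of_norm_sub_le (hθ : θ ≤ 1 / 2) (ht : 0 < t) (hz : ‖z - t‖ ≤ θ * t) :
    t / 2 ≤ z.re := by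
  have := (abs_le.1 ((Complex.abs_re_le_norm (z - t)).trans hz)).1
  simp only [Complex.sub_re, Complex.ofReal_re] at this
  nlinarith

lemma norm_le_one_add_mul_of_norm_sub_le (hz : ‖z - t‖ ≤ θ * t) (ht : 0 < t) :
    ‖z‖ ≤ (1 + θ) * t := by
  calc ‖z‖ ≤ ‖(t : ℂ)‖ + ‖z - t‖ := norm_le_norm_add_norm_sub' z t
    _ ≤ t + θ * t := by rw [Complex.norm_real, norm_of_nonneg ht.le]; gcongr
    _ = (1 + θ) * t := by ring

lemma abs_arg_le_of_norm_sub_le (hθ : θ ≤ 1 / 2) (ht : 0 < t) (hz : ‖z - t‖ ≤ θ * t) :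
    |z.arg| ≤ π * θ := by
  have hre := half_le_re_of_norm_sub_le hθ ht hz
  have hnorm : 0 < ‖z‖ := (by linarith : 0 < z.re).trans_le (Complex.re_le_norm z)
  have him : |z.im| ≤ θ * t := by
    simpa using (Complex.abs_im_le_norm (z - t)).trans hz
  have hsin : Real.sin |z.arg| ≤ 2 * θ := by
    rw [← abs_sin_eq_sin_abs_of_abs_le_pi (Complex.abs_arg_le_pi z), Complex.sin_arg, abs_div,
      abs_norm, div_le_iff₀ hnorm]
    have hθ0 : 0 ≤ θ := nonneg_of_mul_nonneg_left ((norm_nonneg _).trans hz) ht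
    nlinarith [mul_le_mul_of_nonneg_left (hre.trans (Complex.re_le_norm z)) hθ0]
  have hJordan := Real.mul_le_sin (abs_nonneg z.arg)
    (Complex.abs_arg_le_pi_div_two_iff.2 (by linarith))
  have := pi_pos
  calc |z.arg| = π / 2 * (2 / π * |z.arg|) := by field_simp
    _ ≤ π / 2 * (2 * θ) := mul_le_mul_of_nonneg_left (hJordan.trans hsin) (by positivity)
    _ = π * θ := by ring

lemma re_cpow_neg_ge (hβ : 0 < β) (hθ : θ ≤ 1 / 2) (hβθ : β * θ ≤ 1 / 5) (ht : 0 < t)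
    (hz : ‖z - t‖ ≤ θ * t) : t ^ (-β) / 2 ≤ (z ^ (-(β : ℂ))).re := by
  have hθ0 : 0 ≤ θ := nonneg_of_mul_nonneg_left ((norm_nonneg _).trans hz) ht
  have hnorm : 0 < ‖z‖ :=
    (by linarith [half_le_re_of_norm_sub_le hθ ht hz] : 0 < z.re).trans_le (Complex.re_le_norm z)
  have hmod : 4 / 5 * t ^ (-β) ≤ ‖z‖ ^ (-β) := by
    calc 4 / 5 * t ^ (-β) ≤ (1 + θ) ^ (-β) * t ^ (-β) := by
          gcongr
          linarith [one_sub_mul_le_one_add_rpow_neg (by linarith : -1 < θ) hβ.le]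
      _ = ((1 + θ) * t) ^ (-β) := (mul_rpow (by linarith) ht.le).symm
      _ ≤ ‖z‖ ^ (-β) := rpow_le_rpow_of_nonpos hnorm
          (norm_le_one_add_mul_of_norm_sub_le hz ht) (by linarith)
  have hangle : |z.arg * -β| ≤ 0.64 := by
    rw [abs_mul, abs_neg, abs_of_pos hβ]
    calc |z.arg| * β ≤ π * θ * β := by gcongr; exact abs_arg_le_of_norm_sub_le hθ ht hz
      _ ≤ 3.2 * (1 / 5) := by nlinarith [pi_lt_d2, pi_pos]
      _ = 0.64 := by norm_num
  have hcos : 5 / 8 ≤ Real.cos (z.arg * -β) := by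
    nlinarith [one_sub_sq_div_two_le_cos (x := z.arg * -β), sq_abs (z.arg * -β),
      abs_nonneg (z.arg * -β)]
  rw [← Complex.ofReal_neg, Complex.cpow_ofReal_re]
  nlinarith [rpow_pos_of_pos ht (-β)]

lemma norm_flatFnComplex_le (hβ : 0 < β) (hθ : θ ≤ 1 / 2) (hβθ : β * θ ≤ 1 / 5) (ht : 0 < t)
    (hz : ‖z - t‖ ≤ θ * t) : ‖flatFnComplex β z‖ ≤ Real.exp (-(t ^ (-β) / 2)) := by
  rw [flatFnComplex, Complex.norm_exp, Complex.neg_re]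
  exact exp_le_exp.2 (neg_le_neg (re_cpow_neg_ge hβ hθ hβθ ht hz))

lemma norm_iteratedDeriv_flatFnComplex_le (hβ : 0 < β) (hθ0 : 0 < θ) (hθ : θ ≤ 1 / 2)
    (hβθ : β * θ ≤ 1 / 5) (j : ℕ) (ht : 0 < t) :
    ‖iteratedDeriv j (flatFnComplex β) t‖ ≤ j ! * Real.exp (-(t ^ (-β) / 2)) / (θ * t) ^ j := by
  have hball : Metric.closedBall (t : ℂ) (θ * t) ⊆ {z | 0 < z.re} := fun z hz => by
    have := half_le_re_of_norm_sub_le hθ ht (mem_closedBall_iff_norm.1 hz)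
    show 0 < z.re
    linarith
  refine Complex.norm_iteratedDeriv_le_of_forall_mem_sphere_norm_le j (by positivity)
    ((differentiableOn_flatFnComplex β).diffContOnCl_ball hball)
    fun z hz => norm_flatFnComplex_le hβ hθ hβθ ht (mem_sphere_iff_norm.1 hz).le

lemma abs_flatFnDeriv_le (hβ : 0 < β) (hθ0 : 0 < θ) (hθ : θ ≤ 1 / 2) (hβθ : β * θ ≤ 1 / 5)
    (j : ℕ) (ht : 0 < t) :
    |flatFnDeriv β j t| ≤ j ! * Real.exp (-(t ^ (-β) / 2)) / (θ * t) ^ j := by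
  rw [flatFnDeriv_of_pos β j ht]
  exact (Complex.abs_re_le_norm _).trans (norm_iteratedDeriv_flatFnComplex_le hβ hθ0 hθ hβθ j ht)

end Disc

/-- A ratio `θ` admissible in `abs_flatFnDeriv_le`. -/
noncomputable def flatRadius (β : ℝ) : ℝ := min (1 / 2) (1 / (5 * β))

lemma flatRadius_pos {β : ℝ} (hβ : 0 < β) : 0 < flatRadius β :=
  lt_min (by norm_num) (by positivity)

lemma flatRadius_le_half (β : ℝ) : flatRadius β ≤ 1 / 2 := min_le_left _ _

lemma mul_flatRadius_le {β : ℝ} (hβ : 0 < β) : β * flatRadius β ≤ 1 / 5 :=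
  calc β * flatRadius β ≤ β * (1 / (5 * β)) := mul_le_mul_of_nonneg_left (min_le_right _ _) hβ.le
    _ = 1 / 5 := by field_simp

lemma tendsto_exp_neg_rpow_neg_div_pow {β : ℝ} (hβ : 0 < β) (m : ℕ) :
    Tendsto (fun t => Real.exp (-(t ^ (-β) / 2)) / t ^ m) (𝓝[>] 0) (𝓝 0) := by
  refine ((tendsto_rpow_mul_exp_neg_mul_atTop_nhds_zero (m / β) (1 / 2) (by norm_num)).comp
    (tendsto_rpow_neg_nhdsGT_zero (neg_lt_zero.2 hβ))).congr' ?_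
  filter_upwards [self_mem_nhdsWithin] with t (ht : 0 < t)
  rw [Function.comp_apply, ← rpow_mul ht.le, neg_mul, mul_div_cancel₀ _ hβ.ne', rpow_neg ht.le,
    rpow_natCast, div_eq_inv_mul]
  ring_nf

lemma hasDerivAt_of_eq_zero_on_Iic {f f' : ℝ → ℝ} (hf : ∀ t ≤ 0, f t = 0)
    (hf' : ∀ t ≤ 0, f' t = 0) (hpos : ∀ t, 0 < t → HasDerivAt f (f' t) t)
    (hflat : Tendsto (fun t => f t / t) (𝓝[>] 0) (𝓝 0)) (t : ℝ) : HasDerivAt f (f' t) t := by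
  rcases lt_trichotomy t 0 with ht | rfl | ht
  · rw [hf' t ht.le]
    exact (hasDerivAt_const t 0).congr_of_eventuallyEq
      (eventually_of_mem (Iio_mem_nhds ht) fun s hs => hf s (le_of_lt hs))
  · have hslope : slope f 0 = fun s => f s / s := by
      ext s
      simp [slope_def_field, hf 0 le_rfl]
    rw [hf' 0 le_rfl, hasDerivAt_iff_tendsto_slope, ← nhdsLT_sup_nhdsGT, tendsto_sup, hslope]
    refine ⟨tendsto_const_nhds.congr' ?_, hflat⟩
    filter_upwards [self_mem_nhdsWithin] with s (hs : s < 0)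
    rw [hf s hs.le, zero_div]
  · exact hpos t ht

lemma tendsto_flatFnDeriv_div {β : ℝ} (hβ : 0 < β) (j : ℕ) :
    Tendsto (fun t => flatFnDeriv β j t / t) (𝓝[>] 0) (𝓝 0) := by
  set θ := flatRadius β
  have hθ0 : 0 < θ := flatRadius_pos hβ
  have hbound := (tendsto_exp_neg_rpow_neg_div_pow hβ (j + 1)).const_mul (j ! / θ ^ j)
  rw [mul_zero] at hbound
  refine squeeze_zero_norm' ?_ hbound
  filter_upwards [self_mem_nhdsWithin] with t (ht : 0 < t)
  rw [norm_div, norm_of_nonneg ht.le, Real.norm_eq_abs]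
  calc |flatFnDeriv β j t| / t ≤ j ! * Real.exp (-(t ^ (-β) / 2)) / (θ * t) ^ j / t := by
        gcongr
        exact abs_flatFnDeriv_le hβ hθ0 (flatRadius_le_half β) (mul_flatRadius_le hβ) j ht
    _ = j ! / θ ^ j * (Real.exp (-(t ^ (-β) / 2)) / t ^ (j + 1)) := by
        field_simp
        ring

lemma hasDerivAt_flatFnDeriv {β : ℝ} (hβ : 0 < β) (j : ℕ) (t : ℝ) :
    HasDerivAt (flatFnDeriv β j) (flatFnDeriv β (j + 1) t) t := by
  refine hasDerivAt_of_eq_zero_on_Iic (fun s hs => flatFnDeriv_of_nonpos β j hs)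
    (fun s hs => flatFnDeriv_of_nonpos β (j + 1) hs) (fun s hs => ?_)
    (tendsto_flatFnDeriv_div hβ j) t
  have hF : HasDerivAt (iteratedDeriv j (flatFnComplex β))
      (iteratedDeriv (j + 1) (flatFnComplex β) s) s := by
    rw [iteratedDeriv_succ]
    exact (analyticOnNhd_iteratedDeriv_flatFnComplex β j s
      (by simpa using hs)).differentiableAt.hasDerivAt
  rw [flatFnDeriv_of_pos β _ hs]
  exact hF.real_of_complex.congr_of_eventuallyEq
    (eventually_of_mem (Ioi_mem_nhds hs) fun x hx => flatFnDeriv_of_pos β j hx)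

lemma iteratedDeriv_flatFn {β : ℝ} (hβ : 0 < β) (k : ℕ) :
    iteratedDeriv k (flatFn β) = flatFnDeriv β k := by
  induction k with
  | zero => rw [iteratedDeriv_zero, flatFnDeriv_zero]
  | succ k ih =>
    ext t
    rw [iteratedDeriv_succ, ih]
    exact (hasDerivAt_flatFnDeriv hβ k t).deriv

lemma rpow_mul_exp_neg_mul_le {a c u : ℝ} (ha : 0 < a) (hc : 0 < c) (hu : 0 < u) :
    u ^ a * Real.exp (-(c * u)) ≤ (a / (c * Real.exp 1)) ^ a := by
  have hlog := Real.log_le_sub_one_of_pos (show 0 < c * u / a by positivity)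
  rw [Real.log_div (by positivity) ha.ne', Real.log_mul hc.ne' hu.ne'] at hlog
  have key : Real.log u * a - c * u ≤ Real.log (a / (c * Real.exp 1)) * a := by
    rw [Real.log_div ha.ne' (by positivity), Real.log_mul hc.ne' (exp_pos 1).ne', Real.log_exp]
    have : a * (c * u / a) = c * u := by field_simp
    nlinarith
  calc u ^ a * Real.exp (-(c * u)) = Real.exp (Real.log u * a - c * u) := by
        rw [rpow_def_of_pos hu, ← Real.exp_add, sub_eq_add_neg]
    _ ≤ Real.exp (Real.log (a / (c * Real.exp 1)) * a) := exp_le_exp.2 key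
    _ = (a / (c * Real.exp 1)) ^ a := (rpow_def_of_pos (by positivity) _).symm

lemma exp_neg_rpow_neg_div_mul_pow_le {β θ t : ℝ} (hβ : 0 < β) (hθ : 0 < θ) {k : ℕ}
    (hk : k ≠ 0) (ht : 0 < t) :
    Real.exp (-(t ^ (-β) / 2)) / (θ * t) ^ k ≤
      (2 * k / (Real.exp 1 * β * θ ^ β)) ^ ((k : ℝ) / β) := by
  set a := (k : ℝ) / β
  have ha : 0 < a := by positivity
  have hθβ : 0 < θ ^ β := rpow_pos_of_pos hθ β
  have hθa : (θ ^ β) ^ a = θ ^ k := by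
    rw [← rpow_mul hθ.le, mul_div_cancel₀ _ hβ.ne', rpow_natCast]
  have hta : (t ^ (-β)) ^ a = (t ^ k)⁻¹ := by
    rw [← rpow_mul ht.le, neg_mul, mul_div_cancel₀ _ hβ.ne', rpow_neg ht.le, rpow_natCast]
  have hlhs : Real.exp (-(t ^ (-β) / 2)) / (θ * t) ^ k =
      ((θ ^ β) ^ a)⁻¹ * ((t ^ (-β)) ^ a * Real.exp (-(1 / 2 * t ^ (-β)))) := by
    rw [hθa, hta, mul_pow]
    field_simp
  have hrhs : 2 * k / (Real.exp 1 * β * θ ^ β) = (θ ^ β)⁻¹ * (a / (1 / 2 * Real.exp 1)) := by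
    simp only [a]
    field_simp
  rw [hlhs, hrhs, mul_rpow (by positivity) (by positivity), inv_rpow hθβ.le]
  gcongr
  exact rpow_mul_exp_neg_mul_le ha (by norm_num) (rpow_pos_of_pos ht _)

/-- Huang's derivative bound |g^{(k)}(t)| ≤ k!·(2k/(eβθ^β))^{k/β}. -/
theorem flat_function_derivative_bound (β : ℝ) (hβ : 0 < β) :
    ∃ θ : ℝ, θ ∈ Set.Ioo (0:ℝ) 1 ∧ ∀ k : ℕ, 1 ≤ k → ∀ t : ℝ,
      |iteratedDeriv k (flatFn β) t| ≤
        (Nat.factorial k : ℝ) *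
          ((2 * k / (Real.exp 1 * β * θ ^ β)) ^ ((k : ℝ) / β)) := by
  have hθ := flatRadius_pos hβ
  refine ⟨flatRadius β, ⟨hθ, (flatRadius_le_half β).trans_lt (by norm_num)⟩, fun k hk t => ?_⟩
  rw [iteratedDeriv_flatFn hβ]
  rcases le_or_gt t 0 with ht | ht
  · rw [flatFnDeriv_of_nonpos β k ht, abs_zero]
    have := rpow_pos_of_pos hθ β
    positivity
  · calc |flatFnDeriv β k t|
        ≤ k ! * (Real.exp (-(t ^ (-β) / 2)) / (flatRadius β * t) ^ k) :=
          (abs_flatFnDeriv_le hβ hθ (flatRadius_le_half β) (mul_flatRadius_le hβ) k ht).trans_eq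
            (mul_div_assoc _ _ _)
      _ ≤ _ := by
          gcongr
          exact exp_neg_rpow_neg_div_mul_pow_le hβ hθ (by omega) ht
end
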